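/- arXiv:2002.07727 — 3 statements merged into one kernel-verified Lean document; each statement's English description precedes it below -/
import Mathlib

section
/- (Projection/excess lemma) Let π = ⟨q₁,...,q_r⟩ be a path in ℝ^d with endpoints s = q₁, t = q_r, s ≠ t, and let 0 < γ ≤ 1. For each directed edge e = q_{i+1} − q_i, let p(e) be the signed length of the projection of e onto the unit vector u = (t − s)/‖t − s‖, i.e. p(e) = ⟨e, u⟩. Call an edge 'aligned' if the angle between e and u is at most γ. Then the total length of non-aligned edges satisfies Σ_{e non-aligned} ‖e‖ ≤ (24/(11γ²))·E(π), where E(π) = ‖π‖ − ‖t − s‖ is the excess of π. -/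
/-!
Since `u` is a unit vector and the edges telescope to `t - s`, the excess is
`∑ₑ (‖e‖ - ⟪e, u⟫)`, a sum of nonnegative terms. An edge at angle more than `γ` from `u`
contributes at least `(1 - cos γ) ‖e‖ ≥ (11/24) γ² ‖e‖`, the last step by the half-angle
formula `1 - cos γ = 2 sin² (γ/2)` and `sin x ≥ x - x³/6`.
-/

open scoped RealInnerProductSpace
open InnerProductGeometry

namespace Real

lemma cos_le_one_sub_mul_sq_of_abs_le_one {x : ℝ} (hx : |x| ≤ 1) :
    cos x ≤ 1 - 11 / 24 * x ^ 2 := by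
  rw [← cos_abs, ← sq_abs]
  set y := |x|
  have hy0 : 0 ≤ y := abs_nonneg x
  have hsin : y / 2 - (y / 2) ^ 3 / 6 ≤ sin (y / 2) := sin_ge_sub_cube (by positivity)
  have hy2 : y ^ 2 ≤ 1 := by nlinarith
  have hlow : 0 ≤ y / 2 - (y / 2) ^ 3 / 6 := by nlinarith [mul_le_mul_of_nonneg_left hy2 hy0]
  have hhalf : cos y = 1 - 2 * sin (y / 2) ^ 2 := by
    rw [sin_sq_eq_half_sub]; ring_nf
  have hsq := pow_le_pow_left₀ hlow hsin 2
  calc cos y ≤ 1 - 2 * (y / 2 - (y / 2) ^ 3 / 6) ^ 2 := by linarith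
    _ ≤ 1 - y ^ 2 / 2 + y ^ 2 * y ^ 2 / 24 := by nlinarith [pow_nonneg hy0 6]
    _ ≤ 1 - 11 / 24 * y ^ 2 := by nlinarith [mul_le_mul_of_nonneg_left hy2 (sq_nonneg y)]

end Real

lemma Fin.sum_succ_sub_castSucc {M : Type*} [AddCommGroup M] (n : ℕ) (f : Fin (n + 1) → M) :
    ∑ i : Fin n, (f i.succ - f i.castSucc) = f (Fin.last n) - f 0 := by
  induction n with
  | zero => simp
  | succ n ih =>
    rw [Fin.sum_univ_castSucc]
    simpa using congrArg (· + (f (Fin.last (n + 1)) - f (Fin.last n).castSucc))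
      (ih (f ∘ Fin.castSucc))

section InnerProductSpace

variable {E : Type*} [NormedAddCommGroup E] [InnerProductSpace ℝ E]

lemma one_sub_cos_mul_le_norm_mul_norm_sub_inner {e u : E} {γ : ℝ} (hγ : 0 ≤ γ)
    (h : γ ≤ angle e u) :
    (1 - Real.cos γ) * (‖e‖ * ‖u‖) ≤ ‖e‖ * ‖u‖ - ⟪e, u⟫ := by
  have hcos : Real.cos (angle e u) ≤ Real.cos γ :=
    Real.cos_le_cos_of_nonneg_of_le_pi hγ (angle_le_pi e u) h
  rw [← cos_angle_mul_norm_mul_norm]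
  nlinarith [mul_le_mul_of_nonneg_right hcos (by positivity : 0 ≤ ‖e‖ * ‖u‖)]

lemma sum_norm_filter_angle_lt_le {ι : Type*} (s : Finset ι) (f : ι → E) {u : E}
    (hu : ‖u‖ = 1) {γ : ℝ} (hγ0 : 0 < γ) (hγ1 : γ ≤ 1) :
    ∑ j ∈ s.filter (fun j => γ < angle (f j) u), ‖f j‖ ≤
      (24 / (11 * γ ^ 2)) * (∑ j ∈ s, ‖f j‖ - ⟪∑ j ∈ s, f j, u⟫) := by
  have hcos := Real.cos_le_one_sub_mul_sq_of_abs_le_one (abs_le.2 ⟨by linarith, hγ1⟩)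
  have hdefect_nonneg : ∀ j ∈ s, 0 ≤ ‖f j‖ - ⟪f j, u⟫ := fun j _ => by
    have h := real_inner_le_norm (f j) u
    rw [hu, mul_one] at h
    linarith
  have hdefect : ∀ j ∈ s.filter (fun j => γ < angle (f j) u),
      11 * γ ^ 2 / 24 * ‖f j‖ ≤ ‖f j‖ - ⟪f j, u⟫ := fun j hj => by
    have h := one_sub_cos_mul_le_norm_mul_norm_sub_inner hγ0.le (Finset.mem_filter.1 hj).2.le
    rw [hu, mul_one] at h
    nlinarith [norm_nonneg (f j)]
  have key : 11 * γ ^ 2 / 24 * ∑ j ∈ s.filter (fun j => γ < angle (f j) u), ‖f j‖ ≤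
      ∑ j ∈ s, ‖f j‖ - ⟪∑ j ∈ s, f j, u⟫ :=
    calc _ = ∑ j ∈ s.filter (fun j => γ < angle (f j) u), 11 * γ ^ 2 / 24 * ‖f j‖ :=
          Finset.mul_sum _ _ _
      _ ≤ ∑ j ∈ s.filter (fun j => γ < angle (f j) u), (‖f j‖ - ⟪f j, u⟫) :=
          Finset.sum_le_sum hdefect
      _ ≤ ∑ j ∈ s, (‖f j‖ - ⟪f j, u⟫) :=
          Finset.sum_le_sum_of_subset_of_nonneg (Finset.filter_subset _ _)
            fun j hj _ => hdefect_nonneg j hj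
      _ = ∑ j ∈ s, ‖f j‖ - ⟪∑ j ∈ s, f j, u⟫ := by
          rw [Finset.sum_sub_distrib, sum_inner]
  rw [div_mul_eq_mul_div, le_div_iff₀ (by positivity)]
  linarith

end InnerProductSpace

/-- Projection/excess lemma: for a path `q₀,…,q_r` in `ℝ^d` with distinct
endpoints `s = q₀`, `t = q_r` and `0 < γ ≤ 1`, the total length of edges whose
angle to the direction `u = (t−s)/‖t−s‖` exceeds `γ` is at most
`(24/(11γ²))·(‖π‖ − ‖t − s‖)`. -/
theorem projection_excess (d r : ℕ)
    (q : Fin (r + 1) → EuclideanSpace ℝ (Fin d))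
    (hst : q 0 ≠ q (Fin.last r))
    (γ : ℝ) (hγ0 : 0 < γ) (hγ1 : γ ≤ 1) :
    ∑ j ∈ Finset.univ.filter
        (fun j : Fin r =>
          γ < InnerProductGeometry.angle (q j.succ - q j.castSucc)
              (‖q (Fin.last r) - q 0‖⁻¹ • (q (Fin.last r) - q 0))),
        ‖q j.succ - q j.castSucc‖ ≤
      (24 / (11 * γ ^ 2)) *
        ((∑ j : Fin r, ‖q j.succ - q j.castSucc‖) - ‖q (Fin.last r) - q 0‖) := by
  set v := q (Fin.last r) - q 0
  have hv : ‖v‖ ≠ 0 := norm_ne_zero_iff.2 (sub_ne_zero.2 hst.symm)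
  have hu : ‖‖v‖⁻¹ • v‖ = 1 := by rw [norm_smul, norm_inv, norm_norm, inv_mul_cancel₀ hv]
  have hproj : ⟪∑ j : Fin r, (q j.succ - q j.castSucc), ‖v‖⁻¹ • v⟫ = ‖v‖ := by
    rw [Fin.sum_succ_sub_castSucc, real_inner_smul_right, real_inner_self_eq_norm_sq, sq,
      inv_mul_cancel_left₀ hv]
  simpa only [hproj] using
    sum_norm_filter_angle_lt_le Finset.univ (fun j : Fin r => q j.succ - q j.castSucc) hu hγ0 hγ1
end

section
/- (Common-direction lemma) For any unit vectors v₁,...,v_m in ℝ^d with d ≤ m, there exist signs σ₁,...,σ_m ∈ {−1, +1} and a unit vector x ∈ ℝ^d such that ⟨x, σᵢvᵢ⟩ ≥ 1/(8m^{3/2}) for all i ∈ [m]. -/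
/-!
Choose signs maximising the norm of `s = ∑ σⱼ vⱼ`. Flipping `σᵢ` turns `s` into `s - 2 σᵢ vᵢ`, of
squared norm `‖s‖² - 4 ⟪s, σᵢ vᵢ⟫ + 4`, so maximality forces `⟪s, σᵢ vᵢ⟫ ≥ 1`. Since `‖s‖ ≤ m`,
the direction `x = s / ‖s‖` satisfies `⟪x, σᵢ vᵢ⟫ ≥ 1 / m`, which is stronger than the claimed bound.
-/

open Finset RealInnerProductSpace

variable {E : Type*} [NormedAddCommGroup E] [InnerProductSpace ℝ E]

theorem one_le_inner_of_norm_sub_two_smul_le {s w : E} (hw : ‖w‖ = 1)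
    (h : ‖s - (2 : ℝ) • w‖ ≤ ‖s‖) : 1 ≤ ⟪s, w⟫ := by
  have hsq := pow_le_pow_left₀ (norm_nonneg _) h 2
  rw [norm_sub_sq_real, real_inner_smul_right, norm_smul, hw] at hsq
  norm_num at hsq
  linarith

theorem norm_sign_smul {a : ℝ} (ha : a = 1 ∨ a = -1) {w : E} (hw : ‖w‖ = 1) : ‖a • w‖ = 1 := by
  rcases ha with rfl | rfl <;> simp [hw]

variable {ι : Type*} [Fintype ι]

theorem sum_update_neg_smul [DecidableEq ι] (σ : ι → ℝ) (v : ι → E) (i : ι) :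
    ∑ j, Function.update σ i (-σ i) j • v j = ∑ j, σ j • v j - (2 : ℝ) • (σ i • v i) := by
  rw [← add_sum_erase _ _ (mem_univ i), ← add_sum_erase _ _ (mem_univ i),
    sum_congr rfl fun j hj => by rw [Function.update_of_ne (ne_of_mem_erase hj)],
    Function.update_self]
  module

theorem exists_signs_one_le_inner_signed_sum (v : ι → E) (hv : ∀ i, ‖v i‖ = 1) :
    ∃ σ : ι → ℝ, (∀ i, σ i = 1 ∨ σ i = -1) ∧ ∀ i, 1 ≤ ⟪∑ j, σ j • v j, σ i • v i⟫ := by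
  classical
  obtain ⟨σ, hσ, hmax⟩ := (Set.univ.pi fun _ : ι => ({1, -1} : Set ℝ)).exists_max_image
    (fun σ => ‖∑ j, σ j • v j‖) (Set.Finite.pi fun _ => Set.toFinite _) ⟨1, by simp⟩
  simp only [Set.mem_univ_pi, Set.mem_insert_iff, Set.mem_singleton_iff] at hσ hmax
  refine ⟨σ, hσ, fun i => one_le_inner_of_norm_sub_two_smul_le (norm_sign_smul (hσ i) (hv i)) ?_⟩
  rw [← sum_update_neg_smul]
  refine hmax _ fun j => ?_
  rcases eq_or_ne j i with rfl | hj
  · rw [Function.update_self]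
    rcases hσ j with h | h <;> simp [h]
  · rw [Function.update_of_ne hj]
    exact hσ j

theorem exists_signs_unit_one_div_card_le_inner [Nontrivial E] (v : ι → E)
    (hv : ∀ i, ‖v i‖ = 1) :
    ∃ (σ : ι → ℝ) (x : E), (∀ i, σ i = 1 ∨ σ i = -1) ∧ ‖x‖ = 1 ∧
      ∀ i, 1 / (Fintype.card ι : ℝ) ≤ ⟪x, σ i • v i⟫ := by
  obtain ⟨σ, hσ, hs⟩ := exists_signs_one_le_inner_signed_sum v hv
  set s := ∑ j, σ j • v j
  by_cases hs0 : s = 0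
  · obtain ⟨x, hx⟩ := exists_norm_eq E zero_le_one
    refine ⟨σ, x, hσ, hx, fun i => ?_⟩
    have := hs i
    rw [hs0, inner_zero_left] at this
    linarith
  have hs_pos : 0 < ‖s‖ := norm_pos_iff.mpr hs0
  have hs_le : ‖s‖ ≤ Fintype.card ι := by
    calc ‖s‖ ≤ ∑ j, ‖σ j • v j‖ := norm_sum_le _ _
      _ = Fintype.card ι := by simp [norm_sign_smul (hσ _) (hv _)]
  refine ⟨σ, ‖s‖⁻¹ • s, hσ, norm_smul_inv_norm hs0, fun i => ?_⟩
  rw [real_inner_smul_left]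
  calc 1 / (Fintype.card ι : ℝ) ≤ ‖s‖⁻¹ := by
        rw [one_div]; exact inv_anti₀ hs_pos hs_le
    _ ≤ ‖s‖⁻¹ * ⟪s, σ i • v i⟫ := le_mul_of_one_le_right (by positivity) (hs i)

theorem common_direction_general (d m : ℕ) (hd : 0 < d)
    (v : Fin m → EuclideanSpace ℝ (Fin d)) (hv : ∀ i, ‖v i‖ = 1) :
    ∃ (σ : Fin m → ℝ) (x : EuclideanSpace ℝ (Fin d)),
      (∀ i, σ i = 1 ∨ σ i = -1) ∧ ‖x‖ = 1 ∧
      ∀ i, (1 : ℝ) / (8 * m * Real.sqrt m) ≤ (inner ℝ x (σ i • v i) : ℝ) := by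
  have : Nonempty (Fin d) := ⟨⟨0, hd⟩⟩
  obtain ⟨σ, x, hσ, hx, hxv⟩ := exists_signs_unit_one_div_card_le_inner v hv
  rw [Fintype.card_fin] at hxv
  refine ⟨σ, x, hσ, hx, fun i => le_trans ?_ (hxv i)⟩
  have hm : (1 : ℝ) ≤ m := by exact_mod_cast i.pos
  have hsqrt : (1 : ℝ) ≤ Real.sqrt m := Real.one_le_sqrt.mpr hm
  exact one_div_le_one_div_of_le (by linarith) (by nlinarith)

/-- Common-direction lemma: for unit vectors `v₁,…,v_m` in `ℝ^d` with `d ≤ m`,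
there are signs `σᵢ ∈ {−1,+1}` and a unit vector `x` with
`⟪x, σᵢ vᵢ⟫ ≥ 1/(8 m^{3/2})` for all `i`. -/
theorem common_direction (d m : ℕ) (hd : 0 < d) (hdm : d ≤ m)
    (v : Fin m → EuclideanSpace ℝ (Fin d)) (hv : ∀ i, ‖v i‖ = 1) :
    ∃ (σ : Fin m → ℝ) (x : EuclideanSpace ℝ (Fin d)),
      (∀ i, σ i = 1 ∨ σ i = -1) ∧ ‖x‖ = 1 ∧
      ∀ i, (1 : ℝ) / (8 * m * Real.sqrt m) ≤ (inner ℝ x (σ i • v i) : ℝ) :=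
  common_direction_general d m hd v hv
end

section
/- Let π be a path in ℝ^d contained (in x-coordinate) in a slab [a, b] ⊆ ℝ, i.e. every point q of π has q[0] ∈ [a,b]. Suppose each edge of π either has angle at most π/2 − 1/(2m') with the x-axis (making x-progress at least ‖e‖/(3m') by the sine bound, for m' ≥ 1) or is backward-facing. Then the total length of the well-aligned forward edges satisfies (1/(3m'))·Σ_{aligned e} ‖e‖ ≤ (b − a) + Σ_{backward e} ‖e‖. -/
/-!
Each aligned edge gains at least `‖e‖/(3m')` in the `x`-coordinate. By telescoping, the total
`x`-gain of the aligned edges is the net `x`-displacement of the path, at most `b - a` inside the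
slab, plus the `x`-loss of the remaining edges. Those are all backward, and an edge loses at most
its length.
-/

open Finset

theorem Fin.sum_succ_sub_castSucc_s17 {M : Type*} [AddCommGroup M] {r : ℕ} (g : Fin (r + 1) → M) :
    ∑ j : Fin r, (g j.succ - g j.castSucc) = g (Fin.last r) - g 0 := by
  induction r with
  | zero => simp
  | succ r ih =>
    rw [Fin.sum_univ_castSucc]
    simp only [Fin.succ_castSucc, Fin.succ_last]
    rw [ih (fun i => g i.castSucc)]
    simp

theorem sum_increments_le_of_mem_Icc {r : ℕ} {a b : ℝ} (x : Fin (r + 1) → ℝ)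
    (hx : ∀ i, x i ∈ Set.Icc a b) (s : Finset (Fin r)) :
    ∑ j ∈ s, (x j.succ - x j.castSucc) ≤ (b - a) + ∑ j ∈ sᶜ, (x j.castSucc - x j.succ) := by
  have hnet : ∑ j ∈ s, (x j.succ - x j.castSucc) + ∑ j ∈ sᶜ, (x j.succ - x j.castSucc)
      = x (Fin.last r) - x 0 := by
    rw [sum_add_sum_compl, Fin.sum_succ_sub_castSucc_s17]
  have hdec : ∑ j ∈ sᶜ, (x j.castSucc - x j.succ) = -∑ j ∈ sᶜ, (x j.succ - x j.castSucc) := by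
    simp only [← sum_neg_distrib, neg_sub]
  linarith [(hx (Fin.last r)).2, (hx 0).1]

theorem slab_progress_general (d r : ℕ) (hd : 0 < d)
    (q : Fin (r + 1) → EuclideanSpace ℝ (Fin d))
    (a b : ℝ) (m' : ℝ)
    (hin : ∀ i : Fin (r + 1), q i ⟨0, hd⟩ ∈ Set.Icc a b)
    (hsplit : ∀ j : Fin r,
      ‖q j.succ - q j.castSucc‖ / (3 * m') ≤
          q j.succ ⟨0, hd⟩ - q j.castSucc ⟨0, hd⟩ ∨
        q j.succ ⟨0, hd⟩ - q j.castSucc ⟨0, hd⟩ < 0) :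
    (1 / (3 * m')) *
        ∑ j ∈ Finset.univ.filter
          (fun j : Fin r => ‖q j.succ - q j.castSucc‖ / (3 * m') ≤
            q j.succ ⟨0, hd⟩ - q j.castSucc ⟨0, hd⟩),
          ‖q j.succ - q j.castSucc‖ ≤
      (b - a) +
        ∑ j ∈ Finset.univ.filter
          (fun j : Fin r => q j.succ ⟨0, hd⟩ - q j.castSucc ⟨0, hd⟩ < 0),
          ‖q j.succ - q j.castSucc‖ := by
  set x : Fin (r + 1) → ℝ := fun i => q i ⟨0, hd⟩
  set len : Fin r → ℝ := fun j => ‖q j.succ - q j.castSucc‖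
  set aligned := univ.filter fun j => len j / (3 * m') ≤ x j.succ - x j.castSucc
  set backward := univ.filter fun j : Fin r => x j.succ - x j.castSucc < 0
  have hloss (j : Fin r) : x j.castSucc - x j.succ ≤ len j := by
    rw [← neg_sub, ← PiLp.sub_apply]
    exact (neg_le_abs _).trans ((Real.norm_eq_abs _).symm.trans_le (PiLp.norm_apply_le _ _))
  have hcompl : alignedᶜ ⊆ backward := fun j hj => by
    simp only [aligned, backward, compl_filter, mem_filter, mem_univ, true_and, not_le] at hj ⊢
    exact (hsplit j).resolve_left hj.not_ge
  calc 1 / (3 * m') * ∑ j ∈ aligned, len j = ∑ j ∈ aligned, len j / (3 * m') := by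
        simp only [mul_sum, one_div_mul_eq_div]
    _ ≤ ∑ j ∈ aligned, (x j.succ - x j.castSucc) := sum_le_sum fun j hj => (mem_filter.1 hj).2
    _ ≤ (b - a) + ∑ j ∈ alignedᶜ, (x j.castSucc - x j.succ) :=
        sum_increments_le_of_mem_Icc x hin aligned
    _ ≤ (b - a) + ∑ j ∈ backward, len j := by
        gcongr
        exact (sum_le_sum fun j _ => hloss j).trans
          (sum_le_sum_of_subset_of_nonneg hcompl fun j _ _ => norm_nonneg _)

/-- Slab progress bound: if every point of a path lies (in x-coordinate) in
`[a,b]` and every edge is either aligned (x-progress at least `‖e‖/(3m')`) or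
backward-facing (negative x-progress), then
`(1/(3m'))·Σ_{aligned} ‖e‖ ≤ (b − a) + Σ_{backward} ‖e‖`. -/
theorem slab_progress (d r : ℕ) (hd : 0 < d)
    (q : Fin (r + 1) → EuclideanSpace ℝ (Fin d))
    (a b : ℝ) (m' : ℝ) (hm' : 1 ≤ m')
    (hin : ∀ i : Fin (r + 1), q i ⟨0, hd⟩ ∈ Set.Icc a b)
    (hsplit : ∀ j : Fin r,
      ‖q j.succ - q j.castSucc‖ / (3 * m') ≤
          q j.succ ⟨0, hd⟩ - q j.castSucc ⟨0, hd⟩ ∨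
        q j.succ ⟨0, hd⟩ - q j.castSucc ⟨0, hd⟩ < 0) :
    (1 / (3 * m')) *
        ∑ j ∈ Finset.univ.filter
          (fun j : Fin r => ‖q j.succ - q j.castSucc‖ / (3 * m') ≤
            q j.succ ⟨0, hd⟩ - q j.castSucc ⟨0, hd⟩),
          ‖q j.succ - q j.castSucc‖ ≤
      (b - a) +
        ∑ j ∈ Finset.univ.filter
          (fun j : Fin r => q j.succ ⟨0, hd⟩ - q j.castSucc ⟨0, hd⟩ < 0),
          ‖q j.succ - q j.castSucc‖ :=
  slab_progress_general d r hd q a b m' hin hsplit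
end
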